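/- If u - φ has a local minimum at x (with u, φ real-valued functions on ℝ^d), y ∈ ℝ^d is a unit vector, u is constant on the segment {x + ty : |t| < ε₀}, and φ is C², then ⟪y, D²φ(x) y⟫ ≤ 0. -/

import Mathlib

/-!
Restricted to the line `t ↦ x + t • y`, `u` is constant near `t = 0`, so `g t = φ (x + t • y)`
has a local maximum at `0` and `g'' 0 = D²φ(x) y y`. A local maximum with `g'' 0 > 0` is
impossible: the second-derivative test would make `0` also a local minimum, so `g` would be
locally constant and `g'' 0 = 0`.
-/

open Filter Set Topology

abbrev E (d : ℕ) := EuclideanSpace ℝ (Fin d)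

theorem IsLocalMax.deriv_deriv_nonpos {g : ℝ → ℝ} {a : ℝ} (h : IsLocalMax g a)
    (hc : ContinuousAt g a) : deriv (deriv g) a ≤ 0 := by
  by_contra! hpos
  have hmin : IsLocalMin g a := isLocalMin_of_deriv_deriv_pos hpos h.deriv_eq_zero hc
  have hconst : g =ᶠ[𝓝 a] fun _ => g a :=
    (hmin.and h).mono fun _ ht => le_antisymm ht.2 ht.1
  have hderiv : deriv g =ᶠ[𝓝 a] fun _ => 0 := by simpa using hconst.deriv
  simp [hderiv.deriv_eq] at hpos

section

variable {V F : Type*} [NormedAddCommGroup V] [NormedSpace ℝ V]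
  [NormedAddCommGroup F] [NormedSpace ℝ F]

theorem tendsto_add_smul_nhds_zero (x y : V) :
    Tendsto (fun t : ℝ => x + t • y) (𝓝 0) (𝓝 x) :=
  Continuous.tendsto' (by fun_prop) 0 x (by simp)

theorem deriv_deriv_add_smul {f : V → F} {x : V} (y : V)
    (hf : ∀ᶠ z in 𝓝 x, DifferentiableAt ℝ f z) (hf' : DifferentiableAt ℝ (fderiv ℝ f) x) :
    deriv (deriv fun t : ℝ => f (x + t • y)) 0 = fderiv ℝ (fderiv ℝ f) x y y := by
  have hline (t : ℝ) : HasDerivAt (fun s : ℝ => x + s • y) y t := by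
    simpa using ((hasDerivAt_id t).smul_const y).const_add x
  have hfirst : deriv (fun t : ℝ => f (x + t • y)) =ᶠ[𝓝 0]
      fun t => fderiv ℝ f (x + t • y) y := by
    filter_upwards [(tendsto_add_smul_nhds_zero x y).eventually hf] with t ht
    exact (ht.hasFDerivAt.comp_hasDerivAt t (hline t)).deriv
  have hsecond : HasDerivAt (fun t : ℝ => fderiv ℝ f (x + t • y) y)
      (fderiv ℝ (fderiv ℝ f) x y y) 0 := by
    have h := hf'.hasFDerivAt.comp_hasDerivAt_of_eq 0 (hline 0) (by simp)
    simpa using h.clm_apply (hasDerivAt_const (0 : ℝ) y)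
  rw [hfirst.deriv_eq, hsecond.deriv]

end

theorem hessian_nonpos_of_localmin_constant_segment_general {d : ℕ} (u φ : E d → ℝ) (x y : E d)
    (hmin : ∀ᶠ z in 𝓝 x, u x - φ x ≤ u z - φ z)
    (ε₀ : ℝ) (hε₀ : 0 < ε₀)
    (hu : ∀ t : ℝ, |t| < ε₀ → u (x + t • y) = u x)
    (hφ : ContDiff ℝ 2 φ) :
    fderiv ℝ (fderiv ℝ φ) x y y ≤ 0 := by
  have hseg : ∀ᶠ t in 𝓝 (0 : ℝ), |t| < ε₀ :=
    (continuous_abs.tendsto' (0 : ℝ) 0 abs_zero).eventually (eventually_lt_nhds hε₀)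
  have hmax : IsLocalMax (fun t : ℝ => φ (x + t • y)) 0 := by
    filter_upwards [(tendsto_add_smul_nhds_zero x y).eventually hmin, hseg] with t ht hts
    rw [hu t hts] at ht
    simp only [zero_smul, add_zero]
    linarith
  rw [← deriv_deriv_add_smul y (.of_forall (hφ.differentiable two_ne_zero))
    ((hφ.fderiv_right le_rfl).differentiable one_ne_zero x)]
  exact hmax.deriv_deriv_nonpos (hφ.continuous.continuousAt.comp (by fun_prop))

/-- If u - φ has a local minimum at x, y is a unit vector, u is constant
on the segment {x + ty : |t| < ε₀}, and φ is C², then ⟪y, D²φ(x) y⟫ ≤ 0. -/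
theorem hessian_nonpos_of_localmin_constant_segment {d : ℕ} (u φ : E d → ℝ) (x y : E d)
    (hy : ‖y‖ = 1)
    (hmin : ∀ᶠ z in 𝓝 x, u x - φ x ≤ u z - φ z)
    (ε₀ : ℝ) (hε₀ : 0 < ε₀)
    (hu : ∀ t : ℝ, |t| < ε₀ → u (x + t • y) = u x)
    (hφ : ContDiff ℝ 2 φ) :
    fderiv ℝ (fderiv ℝ φ) x y y ≤ 0 :=
  hessian_nonpos_of_localmin_constant_segment_general u φ x y hmin ε₀ hε₀ hu hφ
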